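/- arXiv:2202.12982 — 2 statements merged into one kernel-verified Lean document; each statement's English description precedes it below -/
import Mathlib

section
/- If [g], [h] ∈ Λ_G/≈ are distinct, then 𝒜_{[g]}·𝒜_{[h]} = 0. -/
/-!
A nonzero product of homogeneous elements of degrees `u` and `w` (in `A·A`, `ρ(L)(A)` or
`[L, L]`) has degree `u * w` equal to `1` or in `Λ_G^± ∪ Σ_G^±`, and then `u` and `w` lie in
the same `Λ_G`-connection class. Hence `A_{g'} A_{h'}`, `ρ(L_{g'⁻¹})(A_{h'})` and
`[L_{g'⁻¹}, L_{h'⁻¹}]` vanish for `g' ∈ [g]`, `h' ∈ [h]`. Through the Leibniz rule and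
`ρ[v, w] = [ρ v, ρ w]` this kills the products of the generators `ρ(L_{g'⁻¹})(A_{g'})` with
those of `𝒜_{[h]}`, and the generators `A_{g'⁻¹} A_{g'}` are multiples of `A_{g'}`.
-/

open Submodule

section
variable {G : Type*} [CommGroup G]

/-- A chain connection: a nonempty list `c` starting at `g`, with all entries in
`Main ∪ Other`, all proper partial products in `Main`, and total product `g'` or `g'⁻¹`. -/
def ChainConnected (Main Other : Set G) (g g' : G) : Prop :=
  ∃ c : List G, c ≠ [] ∧ c.head? = some g ∧
    (∀ k ∈ c, k ∈ Main ∪ Other) ∧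
    (∀ i : ℕ, 0 < i → i < c.length → (c.take i).prod ∈ Main) ∧
    (c.prod = g' ∨ c.prod = g'⁻¹)

end

/-- A `G`-graded Lie-Rinehart algebra `(L, A)` over a field `F`. -/
structure GradedLieRinehart (F : Type*) [Field F] (G : Type*) [CommGroup G] [DecidableEq G]
    (A : Type*) [CommRing A] [Algebra F A]
    (L : Type*) [LieRing L] [LieAlgebra F L] [Module A L] [IsScalarTower F A L] where
  ρ : L →ₗ[F] Derivation F A A
  ρ_smul : ∀ (a : A) (v : L) (b : A), ρ (a • v) b = a * ρ v b
  ρ_bracket : ∀ v w : L, ρ ⁅v, w⁆ = ⁅ρ v, ρ w⁆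
  leibniz : ∀ (v w : L) (a : A), ⁅v, a • w⁆ = a • ⁅v, w⁆ + (ρ v a) • w
  𝓛 : G → Submodule F L
  𝓐 : G → Submodule F A
  internalL : DirectSum.IsInternal 𝓛
  internalA : DirectSum.IsInternal 𝓐
  bracket_mem : ∀ {g h : G} {v w : L}, v ∈ 𝓛 g → w ∈ 𝓛 h → ⁅v, w⁆ ∈ 𝓛 (g * h)
  mul_mem : ∀ {g h : G} {a b : A}, a ∈ 𝓐 g → b ∈ 𝓐 h → a * b ∈ 𝓐 (g * h)
  smul_mem : ∀ {h g : G} {a : A} {v : L}, a ∈ 𝓐 h → v ∈ 𝓛 g → a • v ∈ 𝓛 (h * g)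
  rho_mem : ∀ {g h : G} {v : L} {a : A}, v ∈ 𝓛 g → a ∈ 𝓐 h → ρ v a ∈ 𝓐 (g * h)

namespace GradedLieRinehart

variable {F : Type*} [Field F] {G : Type*} [CommGroup G] [DecidableEq G]
  {A : Type*} [CommRing A] [Algebra F A]
  {L : Type*} [LieRing L] [LieAlgebra F L] [Module A L] [IsScalarTower F A L]
variable (𝔏 : GradedLieRinehart F G A L)

/-- The support `Σ_G` of the grading of `L`. -/
def SuppL : Set G := {g | g ≠ 1 ∧ 𝔏.𝓛 g ≠ ⊥}

/-- The support `Λ_G` of the grading of `A`. -/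
def SuppA : Set G := {g | g ≠ 1 ∧ 𝔏.𝓐 g ≠ ⊥}

/-- `Σ_G^± = Σ_G ∪ Σ_G⁻¹`. -/
def Spm : Set G := {g | g ∈ 𝔏.SuppL ∨ g⁻¹ ∈ 𝔏.SuppL}

/-- `Λ_G^± = Λ_G ∪ Λ_G⁻¹`. -/
def Lpm : Set G := {g | g ∈ 𝔏.SuppA ∨ g⁻¹ ∈ 𝔏.SuppA}

/-- `g` is `Σ_G`-connected to `g'`. -/
def SigmaConnected (g g' : G) : Prop := ChainConnected 𝔏.Spm 𝔏.Lpm g g'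

/-- `g` is `Λ_G`-connected to `g'`. -/
def LambdaConnected (g g' : G) : Prop := ChainConnected (𝔏.Lpm ∪ 𝔏.Spm) (∅ : Set G) g g'

/-- The span of products `A_h • L_g`. -/
def smulSub (h g : G) : Submodule F L :=
  Submodule.span F {x | ∃ a ∈ 𝔏.𝓐 h, ∃ v ∈ 𝔏.𝓛 g, x = a • v}

/-- The span of brackets `[L_h, L_g]`. -/
def bracketSub (h g : G) : Submodule F L :=
  Submodule.span F {x | ∃ v ∈ 𝔏.𝓛 h, ∃ w ∈ 𝔏.𝓛 g, x = ⁅v, w⁆}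

/-- `L_{[g],1}`. -/
def L1class (g : G) : Submodule F L :=
  (⨆ g' ∈ {g' | g' ∈ 𝔏.SuppL ∧ 𝔏.SigmaConnected g g' ∧ g' ∈ 𝔏.SuppA}, 𝔏.smulSub g'⁻¹ g') ⊔
  (⨆ g' ∈ {g' | g' ∈ 𝔏.SuppL ∧ 𝔏.SigmaConnected g g'}, 𝔏.bracketSub g'⁻¹ g')

/-- `V_{[g]}`. -/
def Vclass (g : G) : Submodule F L :=
  ⨆ g' ∈ {g' | g' ∈ 𝔏.SuppL ∧ 𝔏.SigmaConnected g g'}, 𝔏.𝓛 g'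

/-- The ideal `I_{[g]} = L_{[g],1} ⊕ V_{[g]}` attached to the class of `g`. -/
def Iclass (g : G) : Submodule F L := 𝔏.L1class g ⊔ 𝔏.Vclass g

/-- `Σ_{g ∈ Σ_G ∩ Λ_G} A_{g⁻¹} L_g + Σ_{g ∈ Σ_G} [L_{g⁻¹}, L_g]`. -/
def L1full : Submodule F L :=
  (⨆ g ∈ 𝔏.SuppL ∩ 𝔏.SuppA, 𝔏.smulSub g⁻¹ g) ⊔ (⨆ g ∈ 𝔏.SuppL, 𝔏.bracketSub g⁻¹ g)

/-- An ideal of the Lie-Rinehart algebra `(L,A)`: a Lie ideal which is an `A`-submodule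
and satisfies `ρ(I)(A)L ⊆ I`. -/
def IsIdealL (I : Submodule F L) : Prop :=
  (∀ (x : L), ∀ y ∈ I, ⁅x, y⁆ ∈ I) ∧ (∀ (a : A), ∀ y ∈ I, a • y ∈ I) ∧
  (∀ v ∈ I, ∀ (a : A) (w : L), (𝔏.ρ v a) • w ∈ I)

/-- A graded submodule of `L`. -/
def IsGradedL (I : Submodule F L) : Prop := I = ⨆ k : G, I ⊓ 𝔏.𝓛 k

/-- A graded ideal of `(L,A)`. -/
def IsGradedIdealL (I : Submodule F L) : Prop := 𝔏.IsIdealL I ∧ 𝔏.IsGradedL I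

/-- `(L,A)` is gr-simple. -/
def GrSimpleL : Prop :=
  (∃ v w : L, ⁅v, w⁆ ≠ 0) ∧ (∃ a b : A, a * b ≠ 0) ∧ (∃ (a : A) (v : L), a • v ≠ 0) ∧
  ∀ I : Submodule F L, 𝔏.IsGradedIdealL I → I = ⊥ ∨ I = ⊤ ∨ I = LinearMap.ker 𝔏.ρ

/-- The span of products `A_h · A_g`. -/
def mulSub (h g : G) : Submodule F A :=
  Submodule.span F {x | ∃ a ∈ 𝔏.𝓐 h, ∃ b ∈ 𝔏.𝓐 g, x = a * b}

/-- The span of `ρ(L_h)(A_g)`. -/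
def rhoSub (h g : G) : Submodule F A :=
  Submodule.span F {x | ∃ v ∈ 𝔏.𝓛 h, ∃ a ∈ 𝔏.𝓐 g, x = 𝔏.ρ v a}

/-- `A_{[g],1}`. -/
def A1class (g : G) : Submodule F A :=
  (⨆ g' ∈ {g' | g' ∈ 𝔏.SuppA ∧ 𝔏.LambdaConnected g g' ∧ g' ∈ 𝔏.SuppL}, 𝔏.rhoSub g'⁻¹ g') ⊔
  (⨆ g' ∈ {g' | g' ∈ 𝔏.SuppA ∧ 𝔏.LambdaConnected g g'}, 𝔏.mulSub g'⁻¹ g')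

/-- `A_{[g]}`. -/
def Aclass (g : G) : Submodule F A :=
  ⨆ g' ∈ {g' | g' ∈ 𝔏.SuppA ∧ 𝔏.LambdaConnected g g'}, 𝔏.𝓐 g'

/-- `𝒜_{[g]} = A_{[g],1} ⊕ A_{[g]}`. -/
def calA (g : G) : Submodule F A := 𝔏.A1class g ⊔ 𝔏.Aclass g

/-- `Σ_{g ∈ Λ_G ∩ Σ_G} ρ(L_{g⁻¹})(A_g) + Σ_{g ∈ Λ_G} A_{g⁻¹} A_g`. -/
def A1full : Submodule F A :=
  (⨆ g ∈ 𝔏.SuppA ∩ 𝔏.SuppL, 𝔏.rhoSub g⁻¹ g) ⊔ (⨆ g ∈ 𝔏.SuppA, 𝔏.mulSub g⁻¹ g)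

/-- An ideal of the commutative associative algebra `A`. -/
def IsIdealA (I : Submodule F A) : Prop := ∀ (a : A), ∀ x ∈ I, a * x ∈ I

/-- A graded submodule of `A`. -/
def IsGradedA (I : Submodule F A) : Prop := I = ⨆ k : G, I ⊓ 𝔏.𝓐 k

/-- A graded ideal of `A`. -/
def IsGradedIdealA (I : Submodule F A) : Prop := IsIdealA I ∧ 𝔏.IsGradedA I

/-- `A` is gr-simple. -/
def GrSimpleA : Prop :=
  (∃ a b : A, a * b ≠ 0) ∧
  ∀ I : Submodule F A, 𝔏.IsGradedIdealA I → I = ⊥ ∨ I = ⊤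

/-- The graded Lie-Rinehart algebra `(L,A)` is tight. -/
def Tight : Prop :=
  (∀ v : L, (∀ w : L, ⁅v, w⁆ = 0) → 𝔏.ρ v = 0 → v = 0) ∧
  (∀ v : L, (∀ a : A, a • v = 0) → v = 0) ∧
  (∀ a : A, (∀ b : A, a * b = 0) → a = 0) ∧
  Submodule.span F {x : A | ∃ b c : A, x = b * c} = ⊤ ∧
  Submodule.span F {x : L | ∃ (a : A) (w : L), x = a • w} = ⊤ ∧
  𝔏.𝓛 1 = 𝔏.L1full ∧ 𝔏.𝓐 1 = 𝔏.A1full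

/-- `(L,A)` is of maximal length. -/
def MaximalLength : Prop :=
  (∀ g ∈ 𝔏.SuppL, Module.rank F (𝔏.𝓛 g) = 1) ∧ (∀ k ∈ 𝔏.SuppA, Module.rank F (𝔏.𝓐 k) = 1)

/-- `(L,A)` is `G`-multiplicative. -/
def GMultiplicative : Prop :=
  (∀ g ∈ 𝔏.SuppL, ∀ h ∈ 𝔏.SuppL, g * h ∈ 𝔏.SuppL → ∃ v ∈ 𝔏.𝓛 g, ∃ w ∈ 𝔏.𝓛 h, ⁅v, w⁆ ≠ 0) ∧
  (∀ k ∈ 𝔏.SuppA, ∀ g ∈ 𝔏.SuppL, k * g ∈ 𝔏.SuppL → ∃ a ∈ 𝔏.𝓐 k, ∃ v ∈ 𝔏.𝓛 g, a • v ≠ 0) ∧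
  (∀ k ∈ 𝔏.SuppA, ∀ j ∈ 𝔏.SuppA, k * j ∈ 𝔏.SuppA → ∃ a ∈ 𝔏.𝓐 k, ∃ b ∈ 𝔏.𝓐 j, a * b ≠ 0)

/-- A gr-simple ideal of `(L,A)`: a graded ideal with nonzero bracket whose only graded
ideals of `L` contained in it are `0`, itself and its intersection with `Ker ρ`. -/
def GrSimpleIdealL (I : Submodule F L) : Prop :=
  𝔏.IsGradedIdealL I ∧ (∃ x ∈ I, ∃ y ∈ I, ⁅x, y⁆ ≠ 0) ∧
  ∀ J : Submodule F L, 𝔏.IsGradedIdealL J → J ≤ I →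
    (J = ⊥ ∨ J = I ∨ J = LinearMap.ker 𝔏.ρ ⊓ I)

end GradedLieRinehart

open GradedLieRinehart

variable {F : Type*} [Field F] {G : Type*} [CommGroup G] [DecidableEq G]
  {A : Type*} [CommRing A] [Algebra F A]
  {L : Type*} [LieRing L] [LieAlgebra F L] [Module A L] [IsScalarTower F A L]

open Relation

section ChainConnected

variable {G : Type*} [CommGroup G] {M : Set G}

/-- A step `p ↦ p * k` with `p, k ∈ M`, as between consecutive partial products of a chain. -/
def MulStep (M : Set G) (p q : G) : Prop := p ∈ M ∧ p⁻¹ * q ∈ M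

lemma reflTransGen_mulStep_of_chain {g : G} (c : List G) (hc : c ≠ []) (hhead : c.head? = some g)
    (hmem : ∀ k ∈ c, k ∈ M) (hprefix : ∀ i, 0 < i → i < c.length → (c.take i).prod ∈ M) :
    ReflTransGen (MulStep M) g c.prod := by
  induction c using List.reverseRecOn with
  | nil => exact absurd rfl hc
  | append_singleton l k ih =>
    rcases eq_or_ne l [] with rfl | hl
    · obtain rfl : k = g := by simpa using hhead
      simpa using ReflTransGen.refl
    have hl_pos : 0 < l.length := List.length_pos_iff.mpr hl
    have hlM : l.prod ∈ M := by
      simpa [List.take_left'] using hprefix l.length hl_pos (by simp)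
    have hpath : ReflTransGen (MulStep M) g l.prod := by
      refine ih hl (by rwa [List.head?_append_of_ne_nil _ hl] at hhead)
        (fun k hk => hmem k (by simp [hk])) fun i hi0 hil => ?_
      simpa [List.take_append_of_le_length hil.le] using hprefix i hi0 (by simp; omega)
    rw [List.prod_append, List.prod_singleton]
    exact hpath.tail ⟨hlM, by simpa using hmem k (by simp)⟩

lemma exists_chain_of_reflTransGen_mulStep {g p : G} (hg : g ∈ M)
    (hpath : ReflTransGen (MulStep M) g p) :
    ∃ c : List G, c ≠ [] ∧ c.head? = some g ∧ (∀ k ∈ c, k ∈ M) ∧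
      (∀ i, 0 < i → i < c.length → (c.take i).prod ∈ M) ∧ c.prod = p := by
  induction hpath with
  | refl =>
    exact ⟨[g], by simp, rfl, by simpa using hg, fun i hi0 hi => by simp at hi; omega, by simp⟩
  | @tail q r _ hstep ih =>
    obtain ⟨c, hc, hhead, hmem, hprefix, rfl⟩ := ih
    refine ⟨c ++ [c.prod⁻¹ * r], by simp, by rwa [List.head?_append_of_ne_nil _ hc], ?_, ?_,
      by simp⟩
    · simpa [or_imp, forall_and] using ⟨hmem, hstep.2⟩
    · intro i hi0 hi
      simp only [List.length_append, List.length_singleton] at hi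
      rw [List.take_append_of_le_length (by omega)]
      rcases (Nat.lt_succ_iff.mp hi).lt_or_eq with hi | rfl
      · exact hprefix i hi0 hi
      · simpa using hstep.1

lemma chainConnected_empty_iff {g g' : G} :
    ChainConnected M ∅ g g' ↔
      g ∈ M ∧ ∃ p, ReflTransGen (MulStep M) g p ∧ (p = g' ∨ p = g'⁻¹) := by
  constructor
  · rintro ⟨c, hc, hhead, hmem, hprefix, hprod⟩
    have hmem : ∀ k ∈ c, k ∈ M := by simpa using hmem
    exact ⟨hmem g (List.mem_of_head? hhead),
      c.prod, reflTransGen_mulStep_of_chain c hc hhead hmem hprefix, hprod⟩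
  · rintro ⟨hg, p, hpath, hp⟩
    obtain ⟨c, hc, hhead, hmem, hprefix, rfl⟩ := exists_chain_of_reflTransGen_mulStep hg hpath
    exact ⟨c, hc, hhead, by simpa using hmem, hprefix, hp⟩

lemma ChainConnected.mem_left {O : Set G} {g g' : G} (h : ChainConnected M O g g') :
    g ∈ M ∪ O :=
  let ⟨_, _, hhead, hmem, _⟩ := h
  hmem g (List.mem_of_head? hhead)

lemma ChainConnected.inv_right {O : Set G} {g g' : G} (h : ChainConnected M O g g') :
    ChainConnected M O g g'⁻¹ :=
  let ⟨c, hc, hhead, hmem, hprefix, hprod⟩ := h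
  ⟨c, hc, hhead, hmem, hprefix, by rwa [inv_inv, or_comm]⟩

variable (hinv : ∀ k ∈ M, k⁻¹ ∈ M)
include hinv

lemma MulStep.symm {p q : G} (hpq : MulStep M p q) (hq : q ∈ M) : MulStep M q p :=
  ⟨hq, by simpa [mul_comm] using hinv _ hpq.2⟩

lemma MulStep.inv {p q : G} (hpq : MulStep M p q) : MulStep M p⁻¹ q⁻¹ :=
  ⟨hinv _ hpq.1, by simpa [mul_comm] using hinv _ hpq.2⟩

lemma reflTransGen_mulStep_inv {p q : G} (hpq : ReflTransGen (MulStep M) p q) :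
    ReflTransGen (MulStep M) p⁻¹ q⁻¹ := by
  induction hpq with
  | refl => exact .refl
  | tail _ hstep ih => exact ih.tail (hstep.inv hinv)

lemma reflTransGen_mulStep_symm {p q : G} (hpq : ReflTransGen (MulStep M) p q) (hq : q ∈ M) :
    ReflTransGen (MulStep M) q p := by
  induction hpq with
  | refl => exact .refl
  | tail _ hstep ih => exact .head (hstep.symm hinv hq) (ih hstep.1)

namespace ChainConnected

variable {g g' g'' : G}

lemma mul_right (h : ChainConnected M ∅ g g') (hg' : g' ∈ M) {k : G} (hk : k ∈ M) :
    ChainConnected M ∅ g (g' * k) := by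
  rw [chainConnected_empty_iff] at h ⊢
  obtain ⟨hg, p, hpath, rfl | rfl⟩ := h
  · exact ⟨hg, p * k, hpath.tail ⟨hg', by simpa using hk⟩, .inl rfl⟩
  · refine ⟨hg, g'⁻¹ * k⁻¹, hpath.tail ⟨hinv _ hg', by simpa using hinv _ hk⟩, .inr ?_⟩
    simp [mul_comm]

lemma symm (h : ChainConnected M ∅ g g') (hg' : g' ∈ M) : ChainConnected M ∅ g' g := by
  rw [chainConnected_empty_iff] at h ⊢
  obtain ⟨hg, p, hpath, rfl | rfl⟩ := h
  · exact ⟨hg', g, reflTransGen_mulStep_symm hinv hpath hg', .inl rfl⟩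
  · refine ⟨hg', g⁻¹, ?_, .inr rfl⟩
    simpa using reflTransGen_mulStep_inv hinv (reflTransGen_mulStep_symm hinv hpath (hinv _ hg'))

lemma trans (h₁ : ChainConnected M ∅ g g') (h₂ : ChainConnected M ∅ g' g'') :
    ChainConnected M ∅ g g'' := by
  rw [chainConnected_empty_iff] at h₁ h₂ ⊢
  obtain ⟨hg, p, hp, rfl | rfl⟩ := h₁ <;> obtain ⟨-, q, hq, hq''⟩ := h₂
  · exact ⟨hg, q, hp.trans hq, hq''⟩
  · refine ⟨hg, q⁻¹, hp.trans (reflTransGen_mulStep_inv hinv hq), ?_⟩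
    rcases hq'' with rfl | rfl <;> simp

lemma of_mul {h u w : G} (hgu : ChainConnected M ∅ g u) (hhw : ChainConnected M ∅ h w)
    (hu : u ∈ M) (hw : w ∈ M) (huw : u * w = 1 ∨ u * w ∈ M) : ChainConnected M ∅ g h := by
  rcases huw with huw | huw
  · obtain rfl : w = u⁻¹ := eq_inv_of_mul_eq_one_right huw
    exact hgu.trans hinv (by simpa using hhw.inv_right.symm hinv (by simpa using hu))
  · have hg : ChainConnected M ∅ g (u * w) := hgu.mul_right hinv hu hw
    have hh : ChainConnected M ∅ h (u * w) := mul_comm w u ▸ hhw.mul_right hinv hw hu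
    exact hg.trans hinv (hh.symm hinv huw)

end ChainConnected

end ChainConnected

lemma Derivation.apply_mul_eq_zero_of_mul_eq_zero {R A : Type*} [CommSemiring R] [CommSemiring A]
    [Algebra R A] (D : Derivation R A A) {a b : A} (hab : a * b = 0) (hb : D b = 0) :
    D a * b = 0 := by
  simpa [hab, hb, mul_comm] using (D.leibniz a b).symm

open scoped Pointwise in
lemma Ideal.mul_eq_zero_of_mem_span {R : Type*} [CommSemiring R] {s t : Set R}
    (hst : ∀ x ∈ s, ∀ y ∈ t, x * y = 0) {x y : R} (hx : x ∈ Ideal.span s)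
    (hy : y ∈ Ideal.span t) : x * y = 0 := by
  have hle : Ideal.span (s * t) ≤ ⊥ := Ideal.span_le.mpr <| by
    rintro _ ⟨x, hx, y, hy, rfl⟩
    exact hst x hx y hy
  simpa using hle (Ideal.span_mul_span' s t ▸ Ideal.mul_mem_mul hx hy)

namespace GradedLieRinehart

variable {𝔏 : GradedLieRinehart F G A L}

lemma inv_mem_Lpm_union_Spm : ∀ k ∈ 𝔏.Lpm ∪ 𝔏.Spm, k⁻¹ ∈ 𝔏.Lpm ∪ 𝔏.Spm := by
  rintro k ((hk | hk) | (hk | hk)) <;> simp [Lpm, Spm, hk]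

lemma SuppA_subset_Lpm_union_Spm : 𝔏.SuppA ⊆ 𝔏.Lpm ∪ 𝔏.Spm := fun _ hk => .inl (.inl hk)

lemma SuppL_subset_Lpm_union_Spm : 𝔏.SuppL ⊆ 𝔏.Lpm ∪ 𝔏.Spm := fun _ hk => .inr (.inl hk)

lemma eq_one_or_mem_SuppA {k : G} {a : A} (ha : a ∈ 𝔏.𝓐 k) (h0 : a ≠ 0) :
    k = 1 ∨ k ∈ 𝔏.SuppA :=
  or_iff_not_imp_left.mpr fun hk => ⟨hk, fun hbot => h0 (by simpa [hbot] using ha)⟩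

lemma eq_one_or_mem_SuppL {k : G} {v : L} (hv : v ∈ 𝔏.𝓛 k) (h0 : v ≠ 0) :
    k = 1 ∨ k ∈ 𝔏.SuppL :=
  or_iff_not_imp_left.mpr fun hk => ⟨hk, fun hbot => h0 (by simpa [hbot] using hv)⟩

lemma not_lambdaConnected_symm {g h g' : G} (hne : ¬ 𝔏.LambdaConnected g h)
    (hgg' : 𝔏.LambdaConnected g g') : ¬ 𝔏.LambdaConnected h g := fun hhg =>
  hne (hhg.symm inv_mem_Lpm_union_Spm (by simpa using hgg'.mem_left))

section Vanishing

variable {g h g' h' : G} (hne : ¬ 𝔏.LambdaConnected g h)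
  (hg' : g' ∈ 𝔏.SuppA) (hgg' : 𝔏.LambdaConnected g g')
  (hh' : h' ∈ 𝔏.SuppA) (hhh' : 𝔏.LambdaConnected h h')
include hne hg' hgg' hh' hhh'

lemma mul_eq_zero_of_not_lambdaConnected {a b : A} (ha : a ∈ 𝔏.𝓐 g') (hb : b ∈ 𝔏.𝓐 h') :
    a * b = 0 := by
  by_contra hab
  exact hne <| hgg'.of_mul inv_mem_Lpm_union_Spm hhh'
    (SuppA_subset_Lpm_union_Spm hg') (SuppA_subset_Lpm_union_Spm hh')
    ((eq_one_or_mem_SuppA (𝔏.mul_mem ha hb) hab).imp_right (SuppA_subset_Lpm_union_Spm ·))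

lemma rho_apply_eq_zero_of_not_lambdaConnected {v : L} {b : A} (hv : v ∈ 𝔏.𝓛 g'⁻¹)
    (hb : b ∈ 𝔏.𝓐 h') : 𝔏.ρ v b = 0 := by
  by_contra hvb
  exact hne <| hgg'.inv_right.of_mul inv_mem_Lpm_union_Spm hhh'
    (inv_mem_Lpm_union_Spm _ (SuppA_subset_Lpm_union_Spm hg')) (SuppA_subset_Lpm_union_Spm hh')
    ((eq_one_or_mem_SuppA (𝔏.rho_mem hv hb) hvb).imp_right (SuppA_subset_Lpm_union_Spm ·))

lemma lie_eq_zero_of_not_lambdaConnected {v w : L} (hv : v ∈ 𝔏.𝓛 g'⁻¹) (hw : w ∈ 𝔏.𝓛 h'⁻¹) :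
    ⁅v, w⁆ = 0 := by
  by_contra hvw
  exact hne <| hgg'.inv_right.of_mul inv_mem_Lpm_union_Spm hhh'.inv_right
    (inv_mem_Lpm_union_Spm _ (SuppA_subset_Lpm_union_Spm hg'))
    (inv_mem_Lpm_union_Spm _ (SuppA_subset_Lpm_union_Spm hh'))
    ((eq_one_or_mem_SuppL (𝔏.bracket_mem hv hw) hvw).imp_right (SuppL_subset_Lpm_union_Spm ·))

lemma rho_apply_rho_apply_eq_zero_of_not_lambdaConnected {v w : L} {b : A}
    (hv : v ∈ 𝔏.𝓛 g'⁻¹) (hw : w ∈ 𝔏.𝓛 h'⁻¹) (hb : b ∈ 𝔏.𝓐 h') : 𝔏.ρ v (𝔏.ρ w b) = 0 := by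
  have hvw := lie_eq_zero_of_not_lambdaConnected hne hg' hgg' hh' hhh' hv hw
  have hvb := rho_apply_eq_zero_of_not_lambdaConnected hne hg' hgg' hh' hhh' hv hb
  simpa [hvw, hvb, Derivation.commutator_apply] using (congrArg (· b) (𝔏.ρ_bracket v w)).symm

lemma rho_apply_mul_eq_zero_of_not_lambdaConnected {v : L} {a b : A} (hv : v ∈ 𝔏.𝓛 g'⁻¹)
    (ha : a ∈ 𝔏.𝓐 g') (hb : b ∈ 𝔏.𝓐 h') : 𝔏.ρ v a * b = 0 :=
  (𝔏.ρ v).apply_mul_eq_zero_of_mul_eq_zero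
    (mul_eq_zero_of_not_lambdaConnected hne hg' hgg' hh' hhh' ha hb)
    (rho_apply_eq_zero_of_not_lambdaConnected hne hg' hgg' hh' hhh' hv hb)

lemma rho_apply_mul_rho_apply_eq_zero_of_not_lambdaConnected {v w : L} {a b : A}
    (hv : v ∈ 𝔏.𝓛 g'⁻¹) (ha : a ∈ 𝔏.𝓐 g') (hw : w ∈ 𝔏.𝓛 h'⁻¹) (hb : b ∈ 𝔏.𝓐 h') :
    𝔏.ρ v a * 𝔏.ρ w b = 0 := by
  have hwba := rho_apply_mul_eq_zero_of_not_lambdaConnected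
    (not_lambdaConnected_symm hne hgg') hh' hhh' hg' hgg' hw hb ha
  refine (𝔏.ρ v).apply_mul_eq_zero_of_mul_eq_zero (by rwa [mul_comm]) ?_
  exact rho_apply_rho_apply_eq_zero_of_not_lambdaConnected hne hg' hgg' hh' hhh' hv hw hb

end Vanishing

variable (𝔏) in
/-- The products `A_{g'⁻¹} A_{g'}` in `𝒜_{[g]}` are multiples of `A_{g'}`, so these elements
generate `𝒜_{[g]}` as an ideal. -/
def classGenerators (g : G) : Set A :=
  {x | ∃ g' ∈ 𝔏.SuppA, 𝔏.LambdaConnected g g' ∧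
    (x ∈ 𝔏.𝓐 g' ∨ ∃ v ∈ 𝔏.𝓛 g'⁻¹, ∃ a ∈ 𝔏.𝓐 g', x = 𝔏.ρ v a)}

lemma calA_le_span_classGenerators (g : G) :
    𝔏.calA g ≤ (Ideal.span (𝔏.classGenerators g)).restrictScalars F := by
  refine sup_le (sup_le ?_ ?_) ?_
  · refine iSup₂_le fun g' ⟨hg', hgg', _⟩ => span_le.mpr ?_
    rintro _ ⟨v, hv, a, ha, rfl⟩
    exact Ideal.subset_span ⟨g', hg', hgg', .inr ⟨v, hv, a, ha, rfl⟩⟩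
  · refine iSup₂_le fun g' ⟨hg', hgg'⟩ => span_le.mpr ?_
    rintro _ ⟨a₁, -, a₂, ha₂, rfl⟩
    exact Ideal.mul_mem_left _ a₁ (Ideal.subset_span ⟨g', hg', hgg', .inl ha₂⟩)
  · exact iSup₂_le fun g' ⟨hg', hgg'⟩ x hx => Ideal.subset_span ⟨g', hg', hgg', .inl hx⟩

lemma mul_eq_zero_of_mem_classGenerators {g h : G} (hne : ¬ 𝔏.LambdaConnected g h) {x y : A}
    (hx : x ∈ 𝔏.classGenerators g) (hy : y ∈ 𝔏.classGenerators h) : x * y = 0 := by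
  obtain ⟨g', hg', hgg', hx | ⟨v, hv, a, ha, rfl⟩⟩ := hx <;>
    obtain ⟨h', hh', hhh', hy | ⟨w, hw, b, hb, rfl⟩⟩ := hy
  · exact mul_eq_zero_of_not_lambdaConnected hne hg' hgg' hh' hhh' hx hy
  · rw [mul_comm]
    exact rho_apply_mul_eq_zero_of_not_lambdaConnected
      (not_lambdaConnected_symm hne hgg') hh' hhh' hg' hgg' hw hb hx
  · exact rho_apply_mul_eq_zero_of_not_lambdaConnected hne hg' hgg' hh' hhh' hv ha hy
  · exact rho_apply_mul_rho_apply_eq_zero_of_not_lambdaConnected hne hg' hgg' hh' hhh' hv ha hw hb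

end GradedLieRinehart

theorem calA_mul_ne_general (𝔏 : GradedLieRinehart F G A L) {g h : G}
    (hne : ¬ 𝔏.LambdaConnected g h) :
    ∀ x ∈ 𝔏.calA g, ∀ y ∈ 𝔏.calA h, x * y = 0 := fun x hx y hy =>
  Ideal.mul_eq_zero_of_mem_span (fun _ hx _ hy => mul_eq_zero_of_mem_classGenerators hne hx hy)
    ((restrictScalars_mem F _ x).mp (calA_le_span_classGenerators g hx))
    ((restrictScalars_mem F _ y).mp (calA_le_span_classGenerators h hy))

/-- If `[g] ≠ [h]` then `𝒜_{[g]} · 𝒜_{[h]} = 0`. -/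
theorem calA_mul_ne (𝔏 : GradedLieRinehart F G A L) {g h : G}
    (hg : g ∈ 𝔏.SuppA) (hh : h ∈ 𝔏.SuppA) (hne : ¬ 𝔏.LambdaConnected g h) :
    ∀ x ∈ 𝔏.calA g, ∀ y ∈ 𝔏.calA h, x * y = 0 :=
  calA_mul_ne_general 𝔏 hne
end

section
/- For every [g] ∈ Λ_G/≈, the subspace 𝒜_{[g]} = A_{[g],1} ⊕ A_{[g]} is a graded ideal of the commutative associative algebra A. -/
open Submodule

open GradedLieRinehart

variable {F : Type*} [Field F] {G : Type*} [CommGroup G] [DecidableEq G]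
  {A : Type*} [CommRing A] [Algebra F A]
  {L : Type*} [LieRing L] [LieAlgebra F L] [Module A L] [IsScalarTower F A L]

section Aux

namespace GradedLieRinehart

variable (𝔏 : GradedLieRinehart F G A L)

lemma aux_lpm_inv {x : G} (hx : x ∈ 𝔏.Lpm) : x⁻¹ ∈ 𝔏.Lpm := by
  rcases hx with h | h
  · exact Or.inr (by simpa using h)
  · exact Or.inl h

lemma aux_spm_inv {x : G} (hx : x ∈ 𝔏.Spm) : x⁻¹ ∈ 𝔏.Spm := by
  rcases hx with h | h
  · exact Or.inr (by simpa using h)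
  · exact Or.inl h

lemma aux_main_inv {x : G} (hx : x ∈ 𝔏.Lpm ∪ 𝔏.Spm) : x⁻¹ ∈ 𝔏.Lpm ∪ 𝔏.Spm := by
  rcases hx with h | h
  · exact Or.inl (𝔏.aux_lpm_inv h)
  · exact Or.inr (𝔏.aux_spm_inv h)

lemma aux_lambdaConnected_inv {g g' : G} (h : 𝔏.LambdaConnected g g') :
    𝔏.LambdaConnected g g'⁻¹ := by
  obtain ⟨c, h1, h2, h3, h4, h5⟩ := h
  exact ⟨c, h1, h2, h3, h4, by rwa [inv_inv, or_comm]⟩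

lemma aux_lambdaConnected_extend {g g' x : G} (hg' : g' ∈ 𝔏.Lpm)
    (hc : 𝔏.LambdaConnected g g') (hx : x ∈ 𝔏.Lpm ∪ 𝔏.Spm) :
    𝔏.LambdaConnected g (g' * x) := by
  obtain ⟨c, h1, h2, h3, h4, h5⟩ := hc
  have hne : c.length ≠ 0 := fun h => h1 (List.length_eq_zero_iff.mp h)
  have hprodmem : c.prod ∈ 𝔏.Lpm ∪ 𝔏.Spm := by
    rcases h5 with h5 | h5
    · rw [h5]; exact Or.inl hg'
    · rw [h5]; exact Or.inl (𝔏.aux_lpm_inv hg')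
  -- choose the element to append depending on which case of h5 holds
  rcases h5 with h5 | h5
  · refine ⟨c ++ [x], by simp, ?_, ?_, ?_, ?_⟩
    · rw [List.head?_append_of_ne_nil _ h1]; exact h2
    · intro k hk
      rcases List.mem_append.mp hk with hk | hk
      · exact h3 k hk
      · rw [List.mem_singleton.mp hk]; exact Or.inl hx
    · intro i hi0 hilen
      rw [List.length_append, List.length_singleton] at hilen
      have hle : i ≤ c.length := Nat.lt_succ_iff.mp hilen
      rw [List.take_append_of_le_length hle]
      rcases lt_or_eq_of_le hle with hlt | heq
      · exact h4 i hi0 hlt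
      · rw [heq, List.take_length, h5]; exact Or.inl hg'
    · left; rw [List.prod_append, List.prod_singleton, h5]
  · refine ⟨c ++ [x⁻¹], by simp, ?_, ?_, ?_, ?_⟩
    · rw [List.head?_append_of_ne_nil _ h1]; exact h2
    · intro k hk
      rcases List.mem_append.mp hk with hk | hk
      · exact h3 k hk
      · rw [List.mem_singleton.mp hk]; exact Or.inl (𝔏.aux_main_inv hx)
    · intro i hi0 hilen
      rw [List.length_append, List.length_singleton] at hilen
      have hle : i ≤ c.length := Nat.lt_succ_iff.mp hilen
      rw [List.take_append_of_le_length hle]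
      rcases lt_or_eq_of_le hle with hlt | heq
      · exact h4 i hi0 hlt
      · rw [heq, List.take_length, h5]; exact Or.inl (𝔏.aux_lpm_inv hg')
    · right; rw [List.prod_append, List.prod_singleton, h5, mul_inv, mul_comm]

/-- membership of `𝓐 g'` in `calA g` for connected `g'` -/
lemma aux_A_le_calA {g g' : G} (hg' : g' ∈ 𝔏.SuppA ∧ 𝔏.LambdaConnected g g') :
    𝔏.𝓐 g' ≤ 𝔏.calA g := by
  refine le_trans ?_ le_sup_right
  exact le_trans (le_iSup₂_of_le g' hg' le_rfl) le_rfl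

lemma aux_mulSub_le_calA {g g' : G} (hg' : g' ∈ {g' | g' ∈ 𝔏.SuppA ∧ 𝔏.LambdaConnected g g'}) :
    𝔏.mulSub g'⁻¹ g' ≤ 𝔏.calA g := by
  refine le_trans ?_ le_sup_left
  refine le_trans ?_ (le_sup_right : _ ≤ 𝔏.A1class g)
  exact le_iSup₂_of_le g' hg' le_rfl

lemma aux_rhoSub_le_calA {g g' : G}
    (hg' : g' ∈ {g' | g' ∈ 𝔏.SuppA ∧ 𝔏.LambdaConnected g g' ∧ g' ∈ 𝔏.SuppL}) :
    𝔏.rhoSub g'⁻¹ g' ≤ 𝔏.calA g := by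
  refine le_trans ?_ le_sup_left
  refine le_trans ?_ (le_sup_left : _ ≤ 𝔏.A1class g)
  exact le_iSup₂_of_le g' hg' le_rfl

/-- Product of a component of `𝓐 h` with a component of `𝓐 g'` for connected `g'`. -/
lemma aux_mul_A_mem {g h g' : G} (hg' : g' ∈ 𝔏.SuppA) (hcon : 𝔏.LambdaConnected g g')
    {a x : A} (ha : a ∈ 𝔏.𝓐 h) (hx : x ∈ 𝔏.𝓐 g') : a * x ∈ 𝔏.calA g := by
  have hmem : a * x ∈ 𝔏.𝓐 (h * g') := 𝔏.mul_mem ha hx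
  by_cases hbot : 𝔏.𝓐 (h * g') = ⊥
  · rw [hbot, Submodule.mem_bot] at hmem; rw [hmem]; exact (𝔏.calA g).zero_mem
  by_cases h1 : h * g' = 1
  · -- h = g'⁻¹, so a * x ∈ mulSub g'⁻¹ g'
    have hh : h = g'⁻¹ := by
      rw [eq_inv_iff_mul_eq_one]; exact h1
    subst hh
    refine 𝔏.aux_mulSub_le_calA ⟨hg', hcon⟩ (Submodule.subset_span ?_)
    exact ⟨a, ha, x, hx, rfl⟩
  · -- h * g' ∈ SuppA
    have hs : h * g' ∈ 𝔏.SuppA := ⟨h1, hbot⟩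
    by_cases hhbot : 𝔏.𝓐 h = ⊥
    · rw [hhbot, Submodule.mem_bot] at ha; rw [ha, zero_mul]
      exact (𝔏.calA g).zero_mem
    by_cases hh1 : h = 1
    · subst hh1
      rw [one_mul] at hmem
      exact 𝔏.aux_A_le_calA ⟨hg', hcon⟩ hmem
    · have hhA : h ∈ 𝔏.SuppA := ⟨hh1, hhbot⟩
      have hcon' : 𝔏.LambdaConnected g (h * g') := by
        rw [mul_comm]
        exact 𝔏.aux_lambdaConnected_extend (Or.inl hg') hcon (Or.inl (Or.inl hhA))
      exact 𝔏.aux_A_le_calA ⟨hs, hcon'⟩ hmem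

end GradedLieRinehart

end Aux

/-- `𝒜_{[g]}` is a graded ideal of the commutative associative algebra `A`. -/
theorem calA_isGradedIdeal (𝔏 : GradedLieRinehart F G A L) {g : G} (hg : g ∈ 𝔏.SuppA) :
    𝔏.IsGradedIdealA (𝔏.calA g) := by
  constructor
  · -- Ideal property
    intro a x hx
    -- reduce to the case a ∈ 𝓐 h
    have hred : ∀ h : G, ∀ a ∈ 𝔏.𝓐 h, ∀ x ∈ 𝔏.calA g, a * x ∈ 𝔏.calA g := by
      intro h a ha
      -- the set of x with a * x ∈ calA g is a submodule containing calA g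
      have : 𝔏.calA g ≤ Submodule.comap (LinearMap.mulLeft F a) (𝔏.calA g) := by
        refine sup_le ?_ ?_
        · -- A1class
          refine sup_le (iSup₂_le fun g' hg' => ?_) (iSup₂_le fun g' hg' => ?_)
          · -- rhoSub g'⁻¹ g'
            rw [rhoSub, Submodule.span_le]
            rintro _ ⟨v, hv, b, hb, rfl⟩
            simp only [SetLike.mem_coe, Submodule.mem_comap, LinearMap.mulLeft_apply]
            obtain ⟨hg'A, hcon, hg'L⟩ := hg'
            -- a * ρ v b = ρ v (a * b) - b * ρ v a
            have hleib : (𝔏.ρ v) (a * b) = a * (𝔏.ρ v) b + b * (𝔏.ρ v) a := by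
              simpa [smul_eq_mul] using (𝔏.ρ v).leibniz a b
            have heq : a * (𝔏.ρ v) b = (𝔏.ρ v) (a * b) - b * (𝔏.ρ v) a := by
              rw [hleib]; ring
            rw [heq]
            refine (𝔏.calA g).sub_mem ?_ ?_
            · -- first term : ρ v (a * b), with a * b ∈ 𝓐 (h * g')
              have hab : a * b ∈ 𝔏.𝓐 (h * g') := 𝔏.mul_mem ha hb
              by_cases habbot : 𝔏.𝓐 (h * g') = ⊥
              · rw [habbot, Submodule.mem_bot] at hab
                rw [hab, map_zero]; exact (𝔏.calA g).zero_mem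
              by_cases hhg1 : h * g' = 1
              · -- a * b ∈ 𝓐 1, ρ v (a*b) ∈ 𝓐 g'⁻¹
                have hmem : (𝔏.ρ v) (a * b) ∈ 𝔏.𝓐 (g'⁻¹ * (h * g')) := 𝔏.rho_mem hv hab
                rw [hhg1, mul_one] at hmem
                by_cases hibot : 𝔏.𝓐 g'⁻¹ = ⊥
                · rw [hibot, Submodule.mem_bot] at hmem; rw [hmem]
                  exact (𝔏.calA g).zero_mem
                · have : g'⁻¹ ∈ 𝔏.SuppA := ⟨by simpa using hg'A.1, hibot⟩
                  exact 𝔏.aux_A_le_calA ⟨this, 𝔏.aux_lambdaConnected_inv hcon⟩ hmem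
              · have hhg : h * g' ∈ 𝔏.SuppA := ⟨hhg1, habbot⟩
                have hmem : (𝔏.ρ v) (a * b) ∈ 𝔏.𝓐 (g'⁻¹ * (h * g')) := 𝔏.rho_mem hv hab
                have hkey : g'⁻¹ * (h * g') = h := by rw [mul_comm h g', inv_mul_cancel_left]
                rw [hkey] at hmem
                by_cases hhbot : 𝔏.𝓐 h = ⊥
                · rw [hhbot, Submodule.mem_bot] at hmem; rw [hmem]
                  exact (𝔏.calA g).zero_mem
                by_cases hh1 : h = 1
                · -- ρ v (a * b) with a * b ∈ 𝓐 g'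
                  subst hh1
                  rw [one_mul] at hab
                  refine 𝔏.aux_rhoSub_le_calA ⟨hg'A, hcon, hg'L⟩ (Submodule.subset_span ?_)
                  exact ⟨v, hv, a * b, hab, rfl⟩
                · have hhA : h ∈ 𝔏.SuppA := ⟨hh1, hhbot⟩
                  have hcon' : 𝔏.LambdaConnected g h := by
                    have := 𝔏.aux_lambdaConnected_extend (Or.inl hg'A) hcon
                      (Or.inl (𝔏.aux_lpm_inv (Or.inl hhg)))
                    have heq2 : g' * (h * g')⁻¹ = h⁻¹ := by rw [mul_inv, mul_comm h⁻¹ g'⁻¹, mul_inv_cancel_left]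
                    rw [heq2] at this
                    simpa using 𝔏.aux_lambdaConnected_inv this
                  exact 𝔏.aux_A_le_calA ⟨hhA, hcon'⟩ hmem
            · -- second term : b * ρ v a, with ρ v a ∈ 𝓐 (g'⁻¹ * h)
              have hra : (𝔏.ρ v) a ∈ 𝔏.𝓐 (g'⁻¹ * h) := 𝔏.rho_mem hv ha
              by_cases hrbot : 𝔏.𝓐 (g'⁻¹ * h) = ⊥
              · rw [hrbot, Submodule.mem_bot] at hra
                rw [hra, mul_zero]; exact (𝔏.calA g).zero_mem
              by_cases hr1 : g'⁻¹ * h = 1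
              · -- h = g', b * ρ v a ∈ 𝓐 g' · 𝓐 1 ⊆ 𝓐 g'
                have hmem : b * (𝔏.ρ v) a ∈ 𝔏.𝓐 (g' * (g'⁻¹ * h)) := 𝔏.mul_mem hb hra
                rw [hr1, mul_one] at hmem
                exact 𝔏.aux_A_le_calA ⟨hg'A, hcon⟩ hmem
              · have hk : g'⁻¹ * h ∈ 𝔏.SuppA := ⟨hr1, hrbot⟩
                rw [mul_comm]
                exact 𝔏.aux_mul_A_mem hg'A hcon hra hb
          · -- mulSub g'⁻¹ g'
            rw [mulSub, Submodule.span_le]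
            rintro _ ⟨c, hc, b, hb, rfl⟩
            simp only [SetLike.mem_coe, Submodule.mem_comap, LinearMap.mulLeft_apply]
            obtain ⟨hg'A, hcon⟩ := hg'
            have heq : a * (c * b) = (a * c) * b := by ring
            rw [heq]
            have hac : a * c ∈ 𝔏.𝓐 (h * g'⁻¹) := 𝔏.mul_mem ha hc
            exact 𝔏.aux_mul_A_mem hg'A hcon hac hb
        · -- Aclass
          refine iSup₂_le fun g' hg' => ?_
          intro x hx
          simp only [Submodule.mem_comap, LinearMap.mulLeft_apply]
          exact 𝔏.aux_mul_A_mem hg'.1 hg'.2 ha hx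
      intro x hx
      exact this hx
    -- now decompose a over the grading
    have htop : (⨆ h : G, 𝔏.𝓐 h) = ⊤ := 𝔏.internalA.submodule_iSup_eq_top
    have hmemtop : a ∈ (⨆ h : G, 𝔏.𝓐 h) := htop ▸ Submodule.mem_top
    refine Submodule.iSup_induction (motive := fun a => a * x ∈ 𝔏.calA g) _ hmemtop
      (fun h a' ha' => hred h a' ha' x hx) ?_ ?_
    · show (0 : A) * x ∈ 𝔏.calA g
      rw [zero_mul]; exact (𝔏.calA g).zero_mem
    · intro a₁ a₂ h₁ h₂
      show (a₁ + a₂) * x ∈ 𝔏.calA g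
      rw [add_mul]; exact (𝔏.calA g).add_mem h₁ h₂
  · -- gradedness
    refine le_antisymm ?_ (iSup_le fun k => inf_le_left)
    refine sup_le ?_ ?_
    · -- A1class ≤ calA ⊓ 𝓐 1
      have hA1 : 𝔏.A1class g ≤ 𝔏.𝓐 (1 : G) := by
        refine sup_le (iSup₂_le fun g' hg' => ?_) (iSup₂_le fun g' hg' => ?_)
        · rw [rhoSub, Submodule.span_le]
          rintro _ ⟨v, hv, b, hb, rfl⟩
          have := 𝔏.rho_mem hv hb
          rwa [inv_mul_cancel] at this
        · rw [mulSub, Submodule.span_le]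
          rintro _ ⟨c, hc, b, hb, rfl⟩
          have := 𝔏.mul_mem hc hb
          rwa [inv_mul_cancel] at this
      refine le_trans (le_inf (le_sup_left : 𝔏.A1class g ≤ 𝔏.calA g) hA1) ?_
      exact le_iSup (fun k => 𝔏.calA g ⊓ 𝔏.𝓐 k) (1 : G)
    · -- Aclass
      refine iSup₂_le fun g' hg' => ?_
      refine le_trans (le_inf (𝔏.aux_A_le_calA hg') le_rfl) ?_
      exact le_iSup (fun k => 𝔏.calA g ⊓ 𝔏.𝓐 k) g'
end
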